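/- arXiv:2206.09916 — 2 statements merged into one kernel-verified Lean document; each statement's English description precedes it below -/
import Mathlib

section
/- If c = d^d/(d+1)^{d+1} with d a positive integer, then the largest modulus of a complex root s of s^{d+1} − s^d + c is exactly d/(d+1); that is, every root satisfies |s| ≤ d/(d+1), with equality for some root. -/
/-- If `c = d^d/(d+1)^{d+1}` with `d` a positive integer, then the largest
modulus among the complex roots of `s^{d+1} − s^d + c` is exactly `d/(d+1)`. -/
theorem max_modulus_root (d : ℕ) (hd : 0 < d) (c : ℝ)
    (hc : c = (d : ℝ) ^ d / ((d : ℝ) + 1) ^ (d + 1)) :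
    IsGreatest {r : ℝ | ∃ s : ℂ, s ^ (d + 1) - s ^ d + (c : ℂ) = 0 ∧ r = ‖s‖}
      ((d : ℝ) / ((d : ℝ) + 1)) := by
  have hdR : (d : ℝ) ≠ 0 := Nat.cast_ne_zero.mpr hd.ne'
  have hd1R : ((d : ℝ) + 1) ≠ 0 := by positivity
  have hdC : (d : ℂ) ≠ 0 := Nat.cast_ne_zero.mpr hd.ne'
  have hd1C : ((d : ℂ) + 1) ≠ 0 := by
    intro h
    have : ((d : ℝ) + 1) = 0 := by exact_mod_cast congrArg Complex.re h
    exact hd1R this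
  have hcC : (c : ℂ) = (d : ℂ) ^ d / ((d : ℂ) + 1) ^ (d + 1) := by
    rw [hc]; push_cast; ring
  have hnorm1 : ‖((d : ℂ) + 1)‖ = (d : ℝ) + 1 := by
    rw [show ((d : ℂ) + 1) = ((d + 1 : ℕ) : ℂ) by push_cast; ring, Complex.norm_natCast]
    push_cast; ring
  constructor
  · refine ⟨(((d : ℝ) / ((d : ℝ) + 1) : ℝ) : ℂ), ?_, ?_⟩
    · have hR : ((d : ℝ) / ((d : ℝ) + 1)) ^ (d + 1) - ((d : ℝ) / ((d : ℝ) + 1)) ^ d + c = 0 := by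
        rw [hc, div_eq_mul_inv ((d : ℝ) ^ d), ← inv_pow]; linear_combination ((d : ℝ) ^ d * (((d : ℝ) + 1)⁻¹) ^ d) * mul_inv_cancel₀ hd1R
      exact_mod_cast congrArg (fun x : ℝ => (x : ℂ)) hR
    · rw [Complex.norm_real]
      exact (abs_of_nonneg (by positivity)).symm
  · rintro r ⟨s, hs, rfl⟩
    set w : ℂ := s * ((d : ℂ) + 1) / d with hw
    have hsw : s = w * d / ((d : ℂ) + 1) := by
      rw [hw]; field_simp
    have hr : (d : ℂ) * w ^ (d + 1) - ((d : ℂ) + 1) * w ^ d + 1 = 0 := by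
      have key : (d : ℂ) ^ d * ((d : ℂ) * w ^ (d + 1) - ((d : ℂ) + 1) * w ^ d + 1)
          = ((d : ℂ) + 1) ^ (d + 1) * (s ^ (d + 1) - s ^ d + (c : ℂ)) := by
        have hpow : ∀ n : ℕ, w ^ n = s ^ n * ((d : ℂ) + 1) ^ n / (d : ℂ) ^ n := by
          intro n; rw [hw, div_pow, mul_pow]
        rw [hcC, hpow (d + 1), hpow d]
        field_simp
        ring
      have h0 : (d : ℂ) ^ d * ((d : ℂ) * w ^ (d + 1) - ((d : ℂ) + 1) * w ^ d + 1) = 0 := by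
        rw [key, hs, mul_zero]
      exact (mul_eq_zero.mp h0).resolve_left (pow_ne_zero _ hdC)
    have hfact : (w - 1) * ((d : ℂ) * w ^ d - ∑ i ∈ Finset.range d, w ^ i) = 0 := by
      rw [← hr]; linear_combination (-1 : ℂ) * geom_sum_mul w d
    have hwle : ‖w‖ ≤ 1 := by
      rcases mul_eq_zero.mp hfact with h1 | h2
      · have hw1 : w = 1 := sub_eq_zero.mp h1
        simp [hw1]
      · by_contra hgt
        push_neg at hgt
        have hG : (d : ℂ) * w ^ d = ∑ i ∈ Finset.range d, w ^ i := sub_eq_zero.mp h2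
        have hA : (d : ℝ) * ‖w‖ ^ d = ‖∑ i ∈ Finset.range d, w ^ i‖ := by
          rw [← hG, norm_mul, norm_pow, Complex.norm_natCast]
        have hB : ‖∑ i ∈ Finset.range d, w ^ i‖ ≤ ∑ i ∈ Finset.range d, ‖w‖ ^ i := by
          refine (norm_sum_le _ _).trans ?_
          simp
        have hCsum : ∑ i ∈ Finset.range d, ‖w‖ ^ i < ∑ i ∈ Finset.range d, ‖w‖ ^ d := by
          refine Finset.sum_lt_sum_of_nonempty (Finset.nonempty_range_iff.mpr hd.ne') ?_
          intro i hi
          exact pow_lt_pow_right₀ hgt (Finset.mem_range.mp hi)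
        have hDsum : ∑ i ∈ Finset.range d, ‖w‖ ^ d = (d : ℝ) * ‖w‖ ^ d := by
          rw [Finset.sum_const, Finset.card_range, nsmul_eq_mul]
        linarith
    rw [hsw, norm_div, norm_mul, Complex.norm_natCast, hnorm1,
      div_le_div_iff₀ (by positivity) (by positivity)]
    have hdpos : (0 : ℝ) < d := by positivity
    nlinarith [norm_nonneg w, hdpos, mul_pos hdpos (by linarith : (0 : ℝ) < (d : ℝ) + 1)]
end

section
/- Let 0 < μ ≤ Lip and set β = (√Lip − √μ)/(√Lip + √μ) and α = 1/Lip. For the scalar NAG-SC iteration applied to f(x) = (λ/2)x² with μ ≤ λ ≤ Lip, i.e., x(k+1) = y(k) − αλ y(k), y(k) = (1+β)x(k) − β x(k−1), the iterates x(k) converge to 0 for any initial conditions x(0), x(1). -/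
set_option maxHeartbeats 1000000

open Filter

/-- If `z (k+1) = a * z k + u k` with `‖a‖ < 1` and `u → 0`, then `z → 0`. -/
lemma nag_aux1 (a : ℂ) (ha : ‖a‖ < 1) (u z : ℕ → ℂ)
    (hu : Tendsto u atTop (nhds 0))
    (h : ∀ k, z (k + 1) = a * z k + u k) :
    Tendsto z atTop (nhds 0) := by
  rw [NormedAddCommGroup.tendsto_nhds_zero]
  intro ε hε
  have ha0 : (0:ℝ) ≤ ‖a‖ := norm_nonneg a
  have hδ : 0 < ε * (1 - ‖a‖) / 2 := by
    have : 0 < 1 - ‖a‖ := by linarith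
    positivity
  obtain ⟨N, hN⟩ := Filter.eventually_atTop.mp
    ((NormedAddCommGroup.tendsto_nhds_zero.mp hu) _ hδ)
  have key : ∀ m, ‖z (N + m)‖ ≤ ‖a‖ ^ m * ‖z N‖ + ε / 2 := by
    intro m
    induction m with
    | zero => simp; linarith
    | succ m ih =>
      have hrec : z (N + (m + 1)) = a * z (N + m) + u (N + m) := by
        have := h (N + m); rw [← this]; ring_nf
      have hb : ‖z (N + (m+1))‖ ≤ ‖a‖ * ‖z (N + m)‖ + ‖u (N + m)‖ := by
        rw [hrec]
        calc ‖a * z (N+m) + u (N+m)‖ ≤ ‖a * z (N+m)‖ + ‖u (N+m)‖ := norm_add_le _ _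
          _ = ‖a‖ * ‖z (N+m)‖ + ‖u (N+m)‖ := by rw [norm_mul]
      have hu' : ‖u (N + m)‖ < ε * (1 - ‖a‖) / 2 := hN _ (Nat.le_add_right _ _)
      have hz0 : (0:ℝ) ≤ ‖z (N+m)‖ := norm_nonneg _
      calc ‖z (N + (m+1))‖ ≤ ‖a‖ * ‖z (N + m)‖ + ‖u (N + m)‖ := hb
        _ ≤ ‖a‖ * (‖a‖ ^ m * ‖z N‖ + ε / 2) + ε * (1 - ‖a‖) / 2 := by nlinarith
        _ = ‖a‖ ^ (m+1) * ‖z N‖ + (‖a‖ * ε / 2 + ε * (1 - ‖a‖) / 2) := by ring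
        _ ≤ ‖a‖ ^ (m+1) * ‖z N‖ + ε / 2 := by nlinarith
  have hpow : Tendsto (fun m => ‖a‖ ^ m * ‖z N‖) atTop (nhds 0) := by
    have := tendsto_pow_atTop_nhds_zero_of_lt_one ha0 ha
    simpa using this.mul_const ‖z N‖
  obtain ⟨M, hM⟩ := Filter.eventually_atTop.mp
    (hpow.eventually (eventually_lt_nhds (show (0:ℝ) < ε/2 by linarith)))
  rw [Filter.eventually_atTop]
  refine ⟨N + M, fun k hk => ?_⟩
  have hkN : N ≤ k := le_trans (Nat.le_add_right _ _) hk
  have hk' : k = N + (k - N) := by omega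
  have hMk : M ≤ k - N := by omega
  calc ‖z k‖ = ‖z (N + (k - N))‖ := by rw [← hk']
    _ ≤ ‖a‖ ^ (k - N) * ‖z N‖ + ε / 2 := key _
    _ < ε / 2 + ε / 2 := by have := hM _ hMk; linarith
    _ = ε := by ring

/-- If `z (k+2) = (r₁+r₂) z (k+1) - r₁ r₂ z k` with `‖r₁‖, ‖r₂‖ < 1`, then `z → 0`. -/
lemma nag_aux2 (r1 r2 : ℂ) (h1 : ‖r1‖ < 1) (h2 : ‖r2‖ < 1) (z : ℕ → ℂ)
    (hrec : ∀ k, z (k + 2) = (r1 + r2) * z (k + 1) - r1 * r2 * z k) :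
    Tendsto z atTop (nhds 0) := by
  set u : ℕ → ℂ := fun k => z (k + 1) - r1 * z k with hu
  have hustep : ∀ k, u (k + 1) = r2 * u k := by
    intro k
    simp only [hu]
    rw [hrec k]
    ring
  have huval : ∀ k, u k = r2 ^ k * u 0 := by
    intro k
    induction k with
    | zero => simp
    | succ k ih => rw [hustep k, ih]; ring
  have hu0 : Tendsto u atTop (nhds 0) := by
    have : Tendsto (fun k => r2 ^ k * u 0) atTop (nhds 0) := by
      simpa using (tendsto_pow_atTop_nhds_zero_of_norm_lt_one h2).mul_const (u 0)
    exact this.congr (fun k => (huval k).symm)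
  exact nag_aux1 r1 h1 u z hu0 (fun k => by simp only [hu]; ring)

/-- Scalar NAG-SC: for `0 < μ ≤ λ ≤ Lip`, `α = 1/Lip`,
`β = (√Lip − √μ)/(√Lip + √μ)`, the iteration
`x(k+2) = (1 − αλ)((1+β)x(k+1) − β x(k))` converges to `0` for any initial
conditions. -/
theorem nag_sc_scalar_converges (μ Lip lam : ℝ) (hμ : 0 < μ) (hmul : μ ≤ lam)
    (hlamL : lam ≤ Lip) (x : ℕ → ℝ)
    (hrec : ∀ k, x (k + 2) =
      (1 - (1 / Lip) * lam) *
        ((1 + (Real.sqrt Lip - Real.sqrt μ) / (Real.sqrt Lip + Real.sqrt μ)) * x (k + 1)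
          - (Real.sqrt Lip - Real.sqrt μ) / (Real.sqrt Lip + Real.sqrt μ) * x k)) :
    Filter.Tendsto x Filter.atTop (nhds 0) := by
  have hL : 0 < Lip := lt_of_lt_of_le hμ (le_trans hmul hlamL)
  set b : ℝ := (Real.sqrt Lip - Real.sqrt μ) / (Real.sqrt Lip + Real.sqrt μ) with hbdef
  set c : ℝ := 1 - (1 / Lip) * lam with hcdef
  have hsμ : 0 < Real.sqrt μ := Real.sqrt_pos.mpr hμ
  have hsL : 0 < Real.sqrt Lip := Real.sqrt_pos.mpr hL
  have hsle : Real.sqrt μ ≤ Real.sqrt Lip := Real.sqrt_le_sqrt (le_trans hmul hlamL)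
  have hden : 0 < Real.sqrt Lip + Real.sqrt μ := by linarith
  have hb0 : 0 ≤ b := div_nonneg (by linarith) (by linarith)
  have hb1 : b < 1 := by
    rw [hbdef, div_lt_one hden]; linarith
  have hc0 : 0 ≤ c := by
    rw [hcdef]
    have : (1 / Lip) * lam ≤ 1 := by
      rw [one_div, inv_mul_le_iff₀ hL]; linarith
    linarith
  have hc1 : c < 1 := by
    rw [hcdef]
    have hlam0 : 0 < lam := lt_of_lt_of_le hμ hmul
    have : 0 < (1 / Lip) * lam := mul_pos (by positivity) hlam0
    linarith
  set s : ℝ := c * (1 + b) with hsdef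
  set p : ℝ := c * b with hpdef
  have hs0 : 0 ≤ s := by positivity
  have hs2 : s < 2 := by nlinarith
  have hp0 : 0 ≤ p := by positivity
  have hp1 : p < 1 := by nlinarith
  have hsp : s - p < 1 := by rw [hsdef, hpdef]; nlinarith
  -- complex sequence
  set z : ℕ → ℂ := fun k => (x k : ℂ) with hz
  have hzrec : ∀ k, z (k + 2) = (s : ℂ) * z (k + 1) - (p : ℂ) * z k := by
    intro k
    simp only [hz, hrec k]
    push_cast
    rw [hsdef, hpdef]
    push_cast
    ring
  have hzt : Tendsto z atTop (nhds 0) := by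
    rcases le_or_gt (4 * p) (s ^ 2) with hD | hD
    · -- real roots
      set d : ℝ := Real.sqrt (s ^ 2 - 4 * p) with hd
      have hd0 : 0 ≤ d := Real.sqrt_nonneg _
      have hdsq : d ^ 2 = s ^ 2 - 4 * p := Real.sq_sqrt (by linarith)
      have hds : d ≤ s := by
        rw [hd]
        calc Real.sqrt (s ^ 2 - 4 * p) ≤ Real.sqrt (s ^ 2) := Real.sqrt_le_sqrt (by linarith)
          _ = s := by rw [Real.sqrt_sq hs0]
      have hdlt : d < 2 - s := by
        have h2s : 0 < 2 - s := by linarith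
        nlinarith [hdsq]
      set r1 : ℝ := (s + d) / 2 with hr1
      set r2 : ℝ := (s - d) / 2 with hr2
      have hr1lt : |r1| < 1 := by
        rw [abs_of_nonneg (by rw [hr1]; positivity)]
        rw [hr1]; linarith
      have hr2lt : |r2| < 1 := by
        rw [abs_of_nonneg (by rw [hr2]; linarith)]
        rw [hr2]; linarith
      refine nag_aux2 (r1 : ℂ) (r2 : ℂ) ?_ ?_ z ?_
      · rwa [Complex.norm_real]
      · rwa [Complex.norm_real]
      · intro k
        rw [hzrec k]
        have hsum : r1 + r2 = s := by rw [hr1, hr2]; ring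
        have hprod : r1 * r2 = p := by rw [hr1, hr2]; nlinarith [hdsq]
        push_cast [← hsum, ← hprod]
        ring
    · -- complex roots
      set t : ℝ := Real.sqrt (4 * p - s ^ 2) with ht
      have ht0 : 0 ≤ t := Real.sqrt_nonneg _
      have htsq : t ^ 2 = 4 * p - s ^ 2 := Real.sq_sqrt (by linarith)
      set r1 : ℂ := (s / 2 : ℝ) + (t / 2 : ℝ) * Complex.I with hr1
      set r2 : ℂ := (s / 2 : ℝ) - (t / 2 : ℝ) * Complex.I with hr2
      have hnorm1 : ‖r1‖ ^ 2 = p := by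
        rw [hr1, Complex.sq_norm, Complex.normSq_apply]
        simp
        nlinarith [htsq]
      have hnorm2 : ‖r2‖ ^ 2 = p := by
        rw [hr2, Complex.sq_norm, Complex.normSq_apply]
        simp
        nlinarith [htsq]
      have h1 : ‖r1‖ < 1 := by nlinarith [norm_nonneg r1, hnorm1]
      have h2 : ‖r2‖ < 1 := by nlinarith [norm_nonneg r2, hnorm2]
      refine nag_aux2 r1 r2 h1 h2 z ?_
      intro k
      rw [hzrec k]
      have hsum : r1 + r2 = (s : ℂ) := by rw [hr1, hr2]; push_cast; ring
      have hprod : r1 * r2 = (p : ℂ) := by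
        rw [hr1, hr2]
        have : (t : ℂ) ^ 2 = (4 * p - s ^ 2 : ℝ) := by
          push_cast [← htsq]; ring
        push_cast at this ⊢
        rw [show ((s:ℂ)/2 + t/2 * Complex.I) * ((s:ℂ)/2 - t/2 * Complex.I)
            = (s:ℂ)^2/4 - (t:ℂ)^2 * Complex.I^2 / 4 by ring]
        rw [Complex.I_sq, this]
        push_cast
        ring
      rw [← hsum, ← hprod]
  -- conclude for real x
  have : Tendsto (fun k => ‖z k‖) atTop (nhds 0) := by
    simpa using hzt.norm
  rw [tendsto_zero_iff_norm_tendsto_zero]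
  refine this.congr (fun k => ?_)
  simp [hz]
end
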